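/- arXiv:math/0201239 — 4 statements merged into one kernel-verified Lean document; each statement's English description precedes it below -/
import Mathlib

section
/- Let X be a locally compact topological space, Y a topological space, f : X → Y continuous, and φ : X × ℝ → X a continuous flow preserving the fibres of f (i.e. f(φₜ(x)) = f(x) for all x, t). If x is an equilibrium point of φ (φₜ(x) = x for all t) and x is an isolated point of f⁻¹(T₂(f(x))), then x is Lyapunov stable: for every neighbourhood U of x there is a neighbourhood V of x such that p ∈ V implies φₜ(p) ∈ U for all t ∈ ℝ. -/
/-- The set of points that cannot be separated from `y` by disjoint neighbourhoods. -/
def T2Set {Y : Type*} [TopologicalSpace Y] (y : Y) : Set Y :=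
  {y' | ∀ U ∈ nhds y, ∀ U' ∈ nhds y', (U ∩ U').Nonempty}

/-!
Take a compact neighbourhood `K ⊆ U` of `x` inside the isolating neighbourhood. No point of
`K \ interior K` lies in `f ⁻¹' T2Set (f x)`, so by compactness `f '' (K \ interior K)` has an
open neighbourhood `O` disjoint from some neighbourhood `W` of `f x`. Since `f` is constant on
orbits, an orbit through `interior K ∩ f ⁻¹' W` never meets `f ⁻¹' O ⊇ K \ interior K`, and so
it never leaves `interior K`.
-/

open Filter Topology Set

theorem notMem_T2Set_iff {Y : Type*} [TopologicalSpace Y] {y y' : Y} :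
    y' ∉ T2Set y ↔ Disjoint (𝓝 y) (𝓝 y') := by
  simp only [T2Set, mem_ofPred_eq, Filter.disjoint_iff, not_forall, not_nonempty_iff_eq_empty,
    disjoint_iff_inter_eq_empty, exists_prop]

namespace Flow

variable {τ α : Type*} [TopologicalSpace τ] [AddGroup τ] [TopologicalSpace α]

theorem specializes_of_mapClusterPt [ContinuousSub τ] (ϕ : Flow τ α) {l : Filter τ} {t : τ}
    {p y : α} (hl : l ≤ 𝓝 t) (hy : MapClusterPt y l (ϕ · p)) : ϕ t p ⤳ y := by
  obtain ⟨u, hul, hu⟩ := mapClusterPt_iff_ultrafilter.1 hy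
  have hsub : Tendsto (t - ·) u (𝓝 0) :=
    ((continuous_const.sub continuous_id).tendsto' t 0 (sub_self t)).mono_left (hul.trans hl)
  have hlim : Tendsto (fun s => ϕ (t - s) (ϕ s p)) u (𝓝 (ϕ 0 y)) :=
    (ϕ.cont'.tendsto (0, y)).comp (hsub.prodMk_nhds hu)
  simp only [← ϕ.map_add, sub_add_cancel, ϕ.map_zero_apply] at hlim
  rw [specializes_iff_pure, ← map_const (f := (u : Filter τ))]
  exact hlim

/-- The times the orbit spends in `interior K` form a clopen set: at a limit time `s`, some
cluster point `y ∈ F ∩ K` of the orbit satisfies `ϕ s p ⤳ y`. No separation axiom is needed. -/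
theorem apply_mem_interior_of_forall_apply_mem [ContinuousSub τ] [PreconnectedSpace τ]
    (ϕ : Flow τ α) {K F : Set α} (hK : IsCompact K) (hF : IsClosed F)
    (hFK : F ∩ K ⊆ interior K) {p : α} (hpF : ∀ s, ϕ s p ∈ F) (hp : p ∈ interior K) (t : τ) :
    ϕ t p ∈ interior K := by
  set T : Set τ := (ϕ · p) ⁻¹' interior K
  have hT_open : IsOpen T :=
    isOpen_interior.preimage (ϕ.continuous continuous_id continuous_const)
  have hT_closed : IsClosed T := by
    refine isClosed_of_closure_subset fun s hs => ?_
    have := mem_closure_iff_nhdsWithin_neBot.1 hs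
    have hK_freq : ∃ᶠ r in 𝓝[T] s, ϕ r p ∈ K :=
      (eventually_nhdsWithin_of_forall fun r (hr : r ∈ T) => interior_subset hr).frequently
    obtain ⟨y, hyK, hy⟩ := hK.exists_mapClusterPt_of_frequently hK_freq
    have hyF : y ∈ F := hF.mem_of_mapClusterPt hy (Eventually.of_forall hpF)
    exact (ϕ.specializes_of_mapClusterPt nhdsWithin_le_nhds hy).mem_open isOpen_interior
      (hFK ⟨hyF, hyK⟩)
  have hT : T = univ :=
    IsClopen.eq_univ ⟨hT_closed, hT_open⟩ ⟨0, by simpa [T, ϕ.map_zero_apply] using hp⟩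
  exact show t ∈ T from hT ▸ mem_univ t

end Flow

theorem stmt6_general {X Y : Type*} [TopologicalSpace X] [LocallyCompactSpace X] [TopologicalSpace Y]
    (f : X → Y) (hf : Continuous f)
    (φ : ℝ → X → X) (hφcont : Continuous fun p : X × ℝ => φ p.2 p.1)
    (hφ0 : ∀ x : X, φ 0 x = x) (hφadd : ∀ (s t : ℝ) (x : X), φ (s + t) x = φ s (φ t x))
    (hpres : ∀ (t : ℝ) (x : X), f (φ t x) = f x)
    (x : X)
    (hiso : ∃ U ∈ nhds x, f ⁻¹' T2Set (f x) ∩ U = {x}) :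
    ∀ U ∈ nhds x, ∃ V ∈ nhds x, ∀ p ∈ V, ∀ t : ℝ, φ t p ∈ U := by
  let ϕ : Flow ℝ X := ⟨φ, hφcont.comp continuous_swap, hφadd, hφ0⟩
  obtain ⟨U₀, hU₀, hiso⟩ := hiso
  intro U hU
  obtain ⟨K, hKx, hKU, hK⟩ := local_compact_nhds (inter_mem hU hU₀)
  have hsep : ∀ q ∈ K \ interior K, Disjoint (𝓝 (f q)) (𝓝 (f x)) := by
    intro q ⟨hqK, hq⟩
    have hqx : q ∉ f ⁻¹' T2Set (f x) ∩ U₀ := by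
      rw [hiso]
      exact fun h => hq (h ▸ mem_interior_iff_mem_nhds.2 hKx)
    exact (notMem_T2Set_iff.1 fun h => hqx ⟨h, (hKU hqK).2⟩).symm
  obtain ⟨O, ⟨hO, hBO⟩, W, ⟨hxW, hW⟩, hOW⟩ :=
    ((hasBasis_nhdsSet _).disjoint_iff (nhds_basis_opens _)).1
      (((hK.diff isOpen_interior).image hf).disjoint_nhdsSet_left.2 (forall_mem_image.2 hsep))
  refine ⟨interior K ∩ f ⁻¹' W,
    inter_mem (interior_mem_nhds.2 hKx) (hf.continuousAt.preimage_mem_nhds (hW.mem_nhds hxW)), ?_⟩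
  rintro p ⟨hpK, hpW⟩ t
  have hFK : (f ⁻¹' O)ᶜ ∩ K ⊆ interior K := fun q ⟨hqO, hqK⟩ =>
    by_contra fun hq => hqO (hBO ⟨q, ⟨hqK, hq⟩, rfl⟩)
  have horbit : ∀ s, φ s p ∈ (f ⁻¹' O)ᶜ := fun s hs =>
    hOW.notMem_of_mem_left hs (by rw [hpres]; exact hpW)
  have hF : IsClosed (f ⁻¹' O)ᶜ := (hO.preimage hf).isClosed_compl
  exact (hKU (interior_subset
    (ϕ.apply_mem_interior_of_forall_apply_mem hK hF hFK horbit hpK t))).1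

theorem stmt6 {X Y : Type*} [TopologicalSpace X] [LocallyCompactSpace X] [TopologicalSpace Y]
    (f : X → Y) (hf : Continuous f)
    (φ : ℝ → X → X) (hφcont : Continuous fun p : X × ℝ => φ p.2 p.1)
    (hφ0 : ∀ x : X, φ 0 x = x) (hφadd : ∀ (s t : ℝ) (x : X), φ (s + t) x = φ s (φ t x))
    (hpres : ∀ (t : ℝ) (x : X), f (φ t x) = f x)
    (x : X) (heq : ∀ t : ℝ, φ t x = x)
    (hiso : ∃ U ∈ nhds x, f ⁻¹' T2Set (f x) ∩ U = {x}) :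
    ∀ U ∈ nhds x, ∃ V ∈ nhds x, ∀ p ∈ V, ∀ t : ℝ, φ t p ∈ U :=
  stmt6_general f hf φ hφcont hφ0 hφadd hpres x hiso
end

section
/- Consider the Poisson structure on ℝ³ given by {h,f} = ∇A·(∇h×∇f) with A = (x² - y²)/2. For the Hamiltonian h = a x² - b y² + z² with a > b, the origin is a Lyapunov stable equilibrium of the vector field ẋ = ∇A × ∇h. (Proof via the Energy-Casimir function h - 2λA = (a-λ)x² - (b-λ)y² + z², which for b < λ < a is positive definite and conserved.) -/
/-!
For every `μ` the Energy–Casimir function `h - 2μA = (a - μ)x² + (μ - b)y² + z²` is conserved,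
because its gradient `∇h - 2μ∇A` is orthogonal to the velocity `∇A × ∇h`. For `b < μ < a`
(we take `μ = (a + b)/2`) it is positive definite, so it bounds `‖x(t)‖²` from above by a
constant that is small when `x(0)` is.
-/

open Matrix

theorem exists_pos_norm_lt_of_apply_le {E : Type*} [SeminormedAddCommGroup E] {V : E → ℝ}
    {k : ℝ} (hk : 0 < k) (hV : ContinuousAt V 0) (hV0 : V 0 = 0)
    (hlow : ∀ v, k * ‖v‖ ^ 2 ≤ V v) :
    ∀ ε > 0, ∃ δ > 0, ∀ v w : E, ‖v‖ < δ → V w ≤ V v → ‖w‖ < ε := by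
  intro ε hε
  obtain ⟨δ, hδ, hVδ⟩ := Metric.continuousAt_iff.mp hV (k * ε ^ 2) (by positivity)
  refine ⟨δ, hδ, fun v w hv hwv => ?_⟩
  have hVv : V v < k * ε ^ 2 := by
    have h := hVδ (x := v) (by simpa using hv)
    rw [hV0, Real.dist_eq, sub_zero] at h
    exact (le_abs_self _).trans_lt h
  have : ‖w‖ ^ 2 < ε ^ 2 := lt_of_mul_lt_mul_left ((hlow w).trans_lt (hwv.trans_lt hVv)) hk.le
  exact (pow_lt_pow_iff_left₀ (norm_nonneg w) hε.le two_ne_zero).mp this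

theorem mul_norm_sq_le_sum_mul_sq {ι : Type*} [Fintype ι] [Nonempty ι] {p : ι → ℝ} {k : ℝ}
    (hk : 0 ≤ k) (hp : ∀ i, k ≤ p i) (v : ι → ℝ) : k * ‖v‖ ^ 2 ≤ ∑ i, p i * v i ^ 2 := by
  obtain ⟨i, hi : ‖v i‖ = ‖v‖⟩ := (IsGreatest.pi_norm v).1
  rw [← hi, Real.norm_eq_abs, sq_abs]
  calc k * v i ^ 2 ≤ p i * v i ^ 2 := by gcongr; exact hp i
    _ ≤ ∑ j, p j * v j ^ 2 :=
      Finset.single_le_sum (f := fun j => p j * v j ^ 2)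
        (fun j _ => mul_nonneg (hk.trans (hp j)) (sq_nonneg _)) (Finset.mem_univ i)

theorem HasDerivAt.sum_mul_sq {ι : Type*} [Fintype ι] (p : ι → ℝ) {c : ℝ → ι → ℝ}
    {c' : ι → ℝ} {t : ℝ} (hc : HasDerivAt c c' t) :
    HasDerivAt (fun s => ∑ i, p i * c s i ^ 2) ((fun i => 2 * p i * c t i) ⬝ᵥ c') t := by
  refine (HasDerivAt.fun_sum fun i _ => ((hasDerivAt_pi.mp hc i).pow 2).const_mul (p i))
    |>.congr_deriv (Finset.sum_congr rfl fun i _ => ?_)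
  simp only [Nat.cast_ofNat]
  ring

def gradA (v : Fin 3 → ℝ) : Fin 3 → ℝ := ![v 0, -v 1, 0]

def gradH (a b : ℝ) (v : Fin 3 → ℝ) : Fin 3 → ℝ := ![2 * a * v 0, -(2 * b * v 1), 2 * v 2]

def energyCasimir (a b μ : ℝ) (v : Fin 3 → ℝ) : ℝ := ∑ i, ![a - μ, μ - b, 1] i * v i ^ 2

theorem grad_energyCasimir (a b μ : ℝ) (v : Fin 3 → ℝ) :
    (fun i => 2 * ![a - μ, μ - b, 1] i * v i) = gradH a b v - (2 * μ) • gradA v := by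
  ext i
  fin_cases i <;>
    simp only [gradA, gradH, Fin.zero_eta, Fin.mk_one, Fin.reduceFinMk, Fin.isValue, cons_val_zero,
      cons_val_one, cons_val, smul_cons, smul_eq_mul, smul_empty, Pi.sub_apply] <;> ring

theorem energyCasimir_eq_of_hasDerivAt (a b μ : ℝ) {c : ℝ → Fin 3 → ℝ}
    (hc : ∀ t, HasDerivAt c (gradA (c t) ⨯₃ gradH a b (c t)) t) (t : ℝ) :
    energyCasimir a b μ (c t) = energyCasimir a b μ (c 0) := by
  have hderiv : ∀ s, HasDerivAt (fun s => energyCasimir a b μ (c s)) 0 s := fun s => by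
    have h := (hc s).sum_mul_sq ![a - μ, μ - b, 1]
    rwa [grad_energyCasimir, sub_dotProduct, smul_dotProduct, dot_cross_self, dot_self_cross,
      smul_zero, sub_zero] at h
  exact is_const_of_deriv_eq_zero (fun s => (hderiv s).differentiableAt)
    (fun s => (hderiv s).deriv) t 0

/-- Energy-Casimir stability on `ℝ³` with bracket determined by `A = (x² - y²)/2` and
Hamiltonian `h = a x² - b y² + z²`, `a > b`: the origin is Lyapunov stable for
`ẋ = ∇A × ∇h` (here `∇A x = (x, -y, 0)` and `∇h x = (2ax, -2by, 2z)`). -/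
theorem stmt9 (a b : ℝ) (hab : a > b) :
    ∀ ε > 0, ∃ δ > 0, ∀ c : ℝ → (Fin 3 → ℝ),
      (∀ t : ℝ, HasDerivAt c
        (crossProduct ![c t 0, -c t 1, 0] ![2 * a * c t 0, -(2 * b * c t 1), 2 * c t 2]) t) →
      ‖c 0‖ < δ → ∀ t : ℝ, ‖c t‖ < ε := by
  intro ε hε
  have hk : 0 < min ((a - b) / 2) 1 := lt_min (by linarith) one_pos
  have hcoeff : ∀ i, min ((a - b) / 2) 1 ≤ ![a - (a + b) / 2, (a + b) / 2 - b, 1] i := by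
    intro i
    fin_cases i <;>
      simp only [Fin.zero_eta, Fin.mk_one, Fin.reduceFinMk, Fin.isValue, cons_val_zero, cons_val_one,
        cons_val]
    exacts [min_le_of_left_le (by linarith), min_le_of_left_le (by linarith), min_le_right _ _]
  have hV : Continuous (energyCasimir a b ((a + b) / 2)) :=
    continuous_finsetSum _ fun i _ => by fun_prop
  obtain ⟨δ, hδ, hsmall⟩ := exists_pos_norm_lt_of_apply_le hk hV.continuousAt
    (by simp [energyCasimir]) (mul_norm_sq_le_sum_mul_sq hk.le hcoeff) ε hε
  exact ⟨δ, hδ, fun c hc hc0 t =>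
    hsmall (c 0) (c t) hc0 (energyCasimir_eq_of_hasDerivAt a b _ hc t).le⟩
end

section
/- For the coadjoint action of SE(2) on se(2)* ≅ ℝ³ and a point μₑ = (μʳₑ, 0) on the μʳ-axis, the T₂-set of the orbit space at μₑ is the μʳ-axis: a point ν belongs to the union of orbits not separable from the orbit of μₑ if and only if ν = (νʳ, 0) for some νʳ ∈ ℝ. Equivalently, in the quotient space ℝ³/SE(2) with the quotient topology, the classes of (μʳ, 0) and (νʳ, 0) cannot be separated by disjoint open sets for any μʳ, νʳ, while the class of any (μʳ, μᵃ) with μᵃ ≠ 0 can be separated from the class of (μʳₑ, 0). -/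
/-- The `π/2` rotation matrix `𝕁 = [[0,1],[-1,0]]`. -/
def Jmat : Matrix (Fin 2) (Fin 2) ℝ := !![0, 1; -1, 0]

/-- Membership in `SO(2)`. -/
def IsSO2 (R : Matrix (Fin 2) (Fin 2) ℝ) : Prop := R * R.transpose = 1 ∧ R.det = 1

/-- The coadjoint action of `(R,a) ∈ SE(2)` on `(μʳ, μᵃ) ∈ se(2)* ≅ ℝ × ℝ²`. -/
def coadj (R : Matrix (Fin 2) (Fin 2) ℝ) (a : Fin 2 → ℝ) (μ : ℝ × (Fin 2 → ℝ)) :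
    ℝ × (Fin 2 → ℝ) :=
  (μ.1 + dotProduct (R.mulVec (Jmat.mulVec μ.2)) a, R.mulVec μ.2)

/-- A set saturated by the `SE(2)`-coadjoint action (a union of orbits). -/
def Invariant (U : Set (ℝ × (Fin 2 → ℝ))) : Prop :=
  ∀ (R : Matrix (Fin 2) (Fin 2) ℝ) (a : Fin 2 → ℝ) (μ : ℝ × (Fin 2 → ℝ)),
    IsSO2 R → μ ∈ U → coadj R a μ ∈ U

/-!
The orbits of points off the `μʳ`-axis are the cylinders `|μᵃ|² = c`, and `|μᵃ|²` is a
continuous invariant, so `{|μᵃ|² < c/2}` and `{|μᵃ|² > c/2}` separate such a point from the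
axis. Conversely, an invariant open neighbourhood of `(μʳ, 0)` contains some `(μʳ, v)` with
`v ≠ 0`, and translations by `a` shift `μʳ` by `⟪𝕁 v, a⟫`, which takes every real value; so it
contains the whole line `{(s, v)}`, which meets any neighbourhood of `(νʳ, 0)` once `v` is small.
-/

open Matrix Filter Topology Set

lemma dotProduct_mulVec_self_of_mul_transpose_eq_one {n α : Type*} [Fintype n] [DecidableEq n]
    [CommRing α] {R : Matrix n n α} (hR : R * Rᵀ = 1) (v : n → α) :
    R *ᵥ v ⬝ᵥ R *ᵥ v = v ⬝ᵥ v := by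
  rw [dotProduct_mulVec, ← vecMul_transpose, vecMul_vecMul, mul_eq_one_comm.mp hR, vecMul_one]

lemma Jmat_mul_transpose : Jmat * Jmatᵀ = 1 := by
  ext i j
  fin_cases i <;> fin_cases j <;> simp [Jmat, mul_apply, Fin.sum_univ_two]

lemma isSO2_one : IsSO2 1 := ⟨by simp, by simp⟩

def cylinder (S : Set ℝ) : Set (ℝ × (Fin 2 → ℝ)) := {μ | μ.2 ⬝ᵥ μ.2 ∈ S}

lemma isOpen_cylinder {S : Set ℝ} (hS : IsOpen S) : IsOpen (cylinder S) :=
  hS.preimage (continuous_snd.dotProduct continuous_snd)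

lemma invariant_cylinder (S : Set ℝ) : Invariant (cylinder S) := fun _ _ _ hR hμ => by
  simpa only [cylinder, mem_ofPred_eq, coadj,
    dotProduct_mulVec_self_of_mul_transpose_eq_one hR.1] using hμ

lemma exists_coadj_one_eq {v : Fin 2 → ℝ} (hv : v ≠ 0) (r s : ℝ) :
    ∃ a, coadj 1 a (r, v) = (s, v) := by
  set w := Jmat *ᵥ v
  have hw : w ⬝ᵥ w ≠ 0 := by
    rwa [dotProduct_mulVec_self_of_mul_transpose_eq_one Jmat_mul_transpose, Ne,
      dotProduct_self_eq_zero]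
  refine ⟨((s - r) / (w ⬝ᵥ w)) • w, ?_⟩
  simp only [coadj, one_mulVec, dotProduct_smul, smul_eq_mul, Prod.mk.injEq, and_true]
  field_simp
  ring

lemma Invariant.mk_mem_of_ne_zero {U : Set (ℝ × (Fin 2 → ℝ))} (hU : Invariant U) {r : ℝ}
    {v : Fin 2 → ℝ} (hv : v ≠ 0) (h : (r, v) ∈ U) (s : ℝ) : (s, v) ∈ U := by
  obtain ⟨a, ha⟩ := exists_coadj_one_eq hv r s
  simpa only [ha] using hU 1 a (r, v) isSO2_one h

lemma inter_nonempty_of_mk_zero_mem {U V : Set (ℝ × (Fin 2 → ℝ))} (hU : IsOpen U)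
    (hV : IsOpen V) (hUi : Invariant U) {r s : ℝ} (hr : (r, 0) ∈ U) (hs : (s, 0) ∈ V) :
    (U ∩ V).Nonempty := by
  have hrU : ∀ᶠ v in 𝓝[≠] (0 : Fin 2 → ℝ), (r, v) ∈ U :=
    nhdsWithin_le_nhds ((hU.preimage (Continuous.prodMk_right r)).mem_nhds hr)
  have hsV : ∀ᶠ v in 𝓝[≠] (0 : Fin 2 → ℝ), (s, v) ∈ V :=
    nhdsWithin_le_nhds ((hV.preimage (Continuous.prodMk_right s)).mem_nhds hs)
  obtain ⟨v, hvU, hvV, hv⟩ := (hrU.and (hsV.and self_mem_nhdsWithin)).exists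
  exact ⟨(s, v), hUi.mk_mem_of_ne_zero hv hvU s, hvV⟩

/-- The `T₂`-set of the orbit space of the `SE(2)` coadjoint action at a point of the
`μʳ`-axis is the `μʳ`-axis: the orbit of `ν` cannot be separated from the orbit of
`(μʳₑ, 0)` by saturated open sets if and only if `νᵃ = 0`. -/
theorem stmt14 (μre : ℝ) (ν : ℝ × (Fin 2 → ℝ)) :
    (∀ U V : Set (ℝ × (Fin 2 → ℝ)), IsOpen U → IsOpen V → Invariant U → Invariant V →
      (μre, (0 : Fin 2 → ℝ)) ∈ U → ν ∈ V → (U ∩ V).Nonempty) ↔ ν.2 = 0 := by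
  constructor
  · intro h
    by_contra hν
    have hpos : 0 < ν.2 ⬝ᵥ ν.2 :=
      (Finset.sum_nonneg fun i _ => mul_self_nonneg (ν.2 i)).lt_of_ne'
        (dotProduct_self_eq_zero.not.mpr hν)
    set t := ν.2 ⬝ᵥ ν.2 / 2
    obtain ⟨μ, hμt, htμ⟩ := h (cylinder (Iio t)) (cylinder (Ioi t)) (isOpen_cylinder isOpen_Iio)
      (isOpen_cylinder isOpen_Ioi) (invariant_cylinder _) (invariant_cylinder _)
      (show (0 : Fin 2 → ℝ) ⬝ᵥ 0 < t by rw [zero_dotProduct]; exact half_pos hpos)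
      (show t < ν.2 ⬝ᵥ ν.2 from half_lt_self hpos)
    exact lt_asymm (a := μ.2 ⬝ᵥ μ.2) hμt htμ
  · rintro hν U V hU hV hUi - hμ hνV
    rw [← Prod.mk.eta (p := ν), hν] at hνV
    exact inter_nonempty_of_mk_zero_mem hU hV hUi hμ hνV
end

section
/- Consider se(2)* ⊕ ℝ² with Hamiltonian h = z - qy + (q² + p²)/2 and equations of motion ẋ = y, ẏ = -x, ż = -qx, q̇ = p, ṗ = -q + y (the Poisson flow for the product of the se(2)* bracket with the canonical bracket on ℝ²). Then for every δ > 0 the curve x = δ sin t, y = δ cos t, z = (δ²/8)(t sin 2t - sin²t - t²), q = (δ/2) t sin t, p = (δ/2)(sin t + t cos t) is a solution, and hence the origin is an unstable equilibrium: solutions starting arbitrarily close to 0 become unbounded. -/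
/-- The system `ẋ = y, ẏ = -x, ż = -qx, q̇ = p, ṗ = -q + y` on `ℝ⁵`
(coordinates `(x, y, z, q, p)`). -/
def Solves (c : ℝ → (Fin 5 → ℝ)) : Prop :=
  ∀ t : ℝ, HasDerivAt c ![c t 1, -c t 0, -(c t 3) * c t 0, c t 4, -c t 3 + c t 1] t

open Real

noncomputable def explicitSolution (δ : ℝ) (t : ℝ) : Fin 5 → ℝ :=
  ![δ * sin t,
    δ * cos t,
    δ ^ 2 / 8 * (t * sin (2 * t) - sin t ^ 2 - t ^ 2),
    δ / 2 * (t * sin t),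
    δ / 2 * (sin t + t * cos t)]

lemma hasDerivAt_mul_sin (t : ℝ) :
    HasDerivAt (fun s => s * sin s) (sin t + t * cos t) t :=
  ((hasDerivAt_id' t).fun_mul (hasDerivAt_sin t)).congr_deriv (by ring)

lemma hasDerivAt_sin_add_mul_cos (t : ℝ) :
    HasDerivAt (fun s => sin s + s * cos s) (2 * cos t - t * sin t) t :=
  ((hasDerivAt_sin t).add ((hasDerivAt_id' t).fun_mul (hasDerivAt_cos t))).congr_deriv (by ring)

lemma hasDerivAt_mul_sin_two_mul_sub (t : ℝ) :
    HasDerivAt (fun s => s * sin (2 * s) - sin s ^ 2 - s ^ 2) (-4 * t * sin t ^ 2) t := by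
  have hsin2 : HasDerivAt (fun s => sin (2 * s)) (cos (2 * t) * 2) t :=
    (hasDerivAt_const_mul 2).sin
  refine ((((hasDerivAt_id' t).fun_mul hsin2).sub ((hasDerivAt_sin t).fun_pow 2)).sub
    (hasDerivAt_pow 2 t)).congr_deriv ?_
  rw [cos_two_mul, sin_two_mul]
  push_cast
  linear_combination 4 * t * sin_sq_add_cos_sq t

lemma solves_explicitSolution (δ : ℝ) : Solves (explicitSolution δ) := by
  intro t
  rw [hasDerivAt_pi]
  intro i
  fin_cases i
  · exact (hasDerivAt_sin t).const_mul δ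
  · exact ((hasDerivAt_cos t).const_mul δ).congr_deriv (by simp [explicitSolution])
  · exact ((hasDerivAt_mul_sin_two_mul_sub t).const_mul (δ ^ 2 / 8)).congr_deriv
      (by simp [explicitSolution]; ring)
  · exact (hasDerivAt_mul_sin t).const_mul (δ / 2)
  · exact ((hasDerivAt_sin_add_mul_cos t).const_mul (δ / 2)).congr_deriv
      (by simp [explicitSolution]; ring)

lemma norm_explicitSolution_zero_le {δ : ℝ} (hδ : 0 ≤ δ) : ‖explicitSolution δ 0‖ ≤ δ := by
  rw [pi_norm_le_iff_of_nonneg hδ]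
  intro i
  fin_cases i <;> simp [explicitSolution, abs_of_nonneg hδ, hδ]

lemma abs_mul_mul_sin_le_norm_explicitSolution (δ t : ℝ) :
    |δ / 2 * (t * sin t)| ≤ ‖explicitSolution δ t‖ := by
  simpa [explicitSolution, abs_div] using norm_le_pi_norm (explicitSolution δ t) 3

/-- Along the times `π/2 + 2πn`, where `sin = 1`, the `q`-coordinate is `δ t / 2`. -/
lemma exists_le_norm_explicitSolution {δ : ℝ} (hδ : 0 < δ) (M : ℝ) :
    ∃ t > 0, M ≤ ‖explicitSolution δ t‖ := by
  obtain ⟨n, hn⟩ := exists_nat_ge (2 * M / δ)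
  set t := π / 2 + n * (2 * π)
  have hsin : sin t = 1 := by rw [sin_add_nat_mul_two_pi, sin_pi_div_two]
  have hn0 : (0 : ℝ) ≤ n := n.cast_nonneg
  have hnt : (n : ℝ) ≤ t := by simp only [t]; nlinarith [pi_gt_three]
  refine ⟨t, by simp only [t]; positivity, ?_⟩
  calc M ≤ δ / 2 * t := by linarith [(div_le_iff₀' hδ).mp (hn.trans hnt)]
    _ ≤ |δ / 2 * (t * sin t)| := by rw [hsin, mul_one]; exact le_abs_self _
    _ ≤ ‖explicitSolution δ t‖ := abs_mul_mul_sin_le_norm_explicitSolution δ t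

/-- For every `δ > 0` the explicit curve is a solution of the `se(2)* ⊕ ℝ²` system with
`h = z - qy + (q² + p²)/2`; hence the origin is unstable: solutions starting arbitrarily
close to `0` become unbounded. -/
theorem stmt17 :
    (∀ δ : ℝ, 0 < δ → Solves (fun t =>
      ![δ * Real.sin t,
        δ * Real.cos t,
        δ ^ 2 / 8 * (t * Real.sin (2 * t) - Real.sin t ^ 2 - t ^ 2),
        δ / 2 * (t * Real.sin t),
        δ / 2 * (Real.sin t + t * Real.cos t)])) ∧
    (∃ ε > 0, ∀ δ > 0, ∃ c : ℝ → (Fin 5 → ℝ), Solves c ∧ ‖c 0‖ < δ ∧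
      ∀ M : ℝ, ∃ t > (0 : ℝ), M ≤ ‖c t‖) := by
  refine ⟨fun δ _ => solves_explicitSolution δ, 1, one_pos, fun δ hδ => ?_⟩
  refine ⟨explicitSolution (δ / 2), solves_explicitSolution _, ?_,
    exists_le_norm_explicitSolution (half_pos hδ)⟩
  exact (norm_explicitSolution_zero_le (half_pos hδ).le).trans_lt (half_lt_self hδ)
end
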